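/- For every integer m ≥ 0 with m ≡ 3, 4, or 6 (mod 7), the coefficient of q^m in the formal power series f_1 · f_7^3 is zero. -/

import Mathlib

open PowerSeries

/-- `p1 ℓ n` is the number of 2-color partitions of `n` in which one of the two colors
only occurs on parts that are multiples of `ℓ`: pairs `(λ, μ)` of partitions with
`|λ| + |μ| = n` and all parts of `μ` divisible by `ℓ`. -/
def p1 (ℓ n : ℕ) : ℕ :=
  ∑ ab ∈ Finset.HasAntidiagonal.antidiagonal n,
    Fintype.card (Nat.Partition ab.1) *
      Fintype.card {p : Nat.Partition ab.2 // ∀ i ∈ p.parts, ℓ ∣ i}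

/-- `fps r = f_r = ∏_{m ≥ 1} (1 - q^{r m})` as a formal power series over `ℤ`;
its `n`-th coefficient agrees with that of the finite partial product up to `m = n`. -/
noncomputable def fps (r : ℕ) : PowerSeries ℤ :=
  PowerSeries.mk fun n =>
    PowerSeries.coeff n (∏ m ∈ Finset.Icc 1 n, (1 - (PowerSeries.X : PowerSeries ℤ) ^ (r * m)))

/-- `fpsinv r = 1 / f_r`, the multiplicative inverse of `fps r` (whose constant term is `1`). -/
noncomputable def fpsinv (r : ℕ) : PowerSeries ℤ :=
  PowerSeries.invOfUnit (fps r) 1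

/-- The "huffing" operator modulo 7: `huff (∑ a_n q^n) = ∑ a_{7n} q^{7n}`. -/
noncomputable def huff (F : PowerSeries ℤ) : PowerSeries ℤ :=
  PowerSeries.mk fun n => if 7 ∣ n then PowerSeries.coeff n F else 0

/-- The explicit rows `1 ≤ i ≤ 7` of the matrix `m_{i,j}` (row `i` has length `2 i`,
and `m_{i,j} = 0` for `j > 2 i`). -/
def mrow : ℕ → List ℤ
  | 1 => [7, 7^2]
  | 2 => [10, 9*7^2, 2*7^4, 7^5]
  | 3 => [3, 114*7, 85*7^3, 24*7^5, 3*7^7, 7^8]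
  | 4 => [0, 82*7, 176*7^3, 845*7^4, 272*7^6, 46*7^8, 4*7^10, 7^11]
  | 5 => [0, 190, 1265*7^2, 1895*7^4, 1233*7^6, 3025*7^7, 620*7^9, 75*7^11, 5*7^13, 7^14]
  | 6 => [0, 27, 736*7^2, 16782*7^3, 20424*7^5, 12825*7^7, 4770*7^9, 7830*7^10, 1178*7^12,
      111*7^14, 6*7^16, 7^17]
  | 7 => [0, 1, 253*7^2, 1902*7^4, 4246*7^6, 31540*7^7, 19302*7^9, 7501*7^11, 1944*7^13,
      2397*7^14, 285*7^16, 22*7^18, 7^20, 7^20]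
  | _ => []

/-- The matrix `m_{i,j}` (for `i, j ≥ 1`): explicit values in rows `1 ≤ i ≤ 7`,
`m_{i,1} = 0` for `i ≥ 4`, `m_{i,2} = 0` for `i ≥ 8`, and for `i ≥ 8`, `j ≥ 3` the
recurrence of Garvan. -/
def mval (i j : ℕ) : ℤ :=
  if _h : i = 0 ∨ j = 0 then 0
  else if i ≤ 7 then (mrow i).getD (j - 1) 0
  else if j ≤ 2 then 0
  else
    7 * mval (i-3) (j-1) + 35 * mval (i-2) (j-1) + 49 * mval (i-1) (j-1)
      + mval (i-7) (j-2) + 7 * mval (i-6) (j-2) + 21 * mval (i-5) (j-2)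
      + 49 * mval (i-4) (j-2) + 147 * mval (i-3) (j-2) + 343 * mval (i-2) (j-2)
      + 343 * mval (i-1) (j-2)
termination_by j
decreasing_by all_goals omega

/-- The vectors `x_k = (x_{k,1}, x_{k,2}, …)`: `x_1 = (7, 7², 0, …)` and
`x_{k+1,i} = ∑_{j ≥ 1} x_{k,j} m_{4j, j+i}` for `k` odd,
`x_{k+1,i} = ∑_{j ≥ 1} x_{k,j} m_{4j+1, j+i}` for `k` even (the sums have finite support). -/
noncomputable def xv : ℕ → ℕ → ℤ
  | 0, _ => 0
  | 1, i => if i = 1 then 7 else if i = 2 then 7^2 else 0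
  | k+2, i =>
    if (k+1) % 2 = 1 then ∑ᶠ j : ℕ, xv (k+1) (j+1) * mval (4*(j+1)) ((j+1)+i)
    else ∑ᶠ j : ℕ, xv (k+1) (j+1) * mval (4*(j+1)+1) ((j+1)+i)

/-- `yodd k β j = y^{(2k-1)}_{β,j}`: `y^{(2k-1)}_{1,j} = x_{2k-1,j}` and
`y^{(2k-1)}_{β+1,j} = ∑_{i ≥ 1} y^{(2k-1)}_{β,i} m_{4i+1, i+j}`. -/
noncomputable def yodd (k : ℕ) : ℕ → ℕ → ℤ
  | 0, _ => 0
  | 1, j => xv (2*k-1) j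
  | β+2, j => ∑ᶠ i : ℕ, yodd k (β+1) (i+1) * mval (4*(i+1)+1) ((i+1)+j)

/-- `yeven k β j = y^{(2k)}_{β,j}`: `y^{(2k)}_{1,j} = x_{2k-1,j}` and
`y^{(2k)}_{β+1,j} = ∑_{i ≥ 1} y^{(2k)}_{β,i} m_{4i, i+j}` for `β` odd,
`y^{(2k)}_{β+1,j} = ∑_{i ≥ 1} y^{(2k)}_{β,i} m_{4i+2, i+j}` for `β` even. -/
noncomputable def yeven (k : ℕ) : ℕ → ℕ → ℤ
  | 0, _ => 0
  | 1, j => xv (2*k-1) j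
  | β+2, j =>
    if (β+1) % 2 = 1 then ∑ᶠ i : ℕ, yeven k (β+1) (i+1) * mval (4*(i+1)) ((i+1)+j)
    else ∑ᶠ i : ℕ, yeven k (β+1) (i+1) * mval (4*(i+1)+2) ((i+1)+j)

/-- `lam k = λ_k`, the unique integer with `0 < λ_k < 7^k` and `24 λ_k ≡ 1 (mod 7^k)`. -/
noncomputable def lam (k : ℕ) : ℕ := ((24 : ZMod (7^k))⁻¹).val

namespace FranklinAux

open Finset

def mnn (S : Finset ℕ) : ℕ := if h : S.Nonempty then S.min' h else 0
def mxx (S : Finset ℕ) : ℕ := S.sup id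

lemma mnn_mem {S : Finset ℕ} (h : S.Nonempty) : mnn S ∈ S := by
  rw [mnn, dif_pos h]; exact S.min'_mem h

lemma mnn_le {S : Finset ℕ} {x : ℕ} (hx : x ∈ S) : mnn S ≤ x := by
  rw [mnn, dif_pos ⟨x, hx⟩]; exact Finset.min'_le _ _ hx

lemma le_mnn {S : Finset ℕ} {a : ℕ} (h : S.Nonempty) (ha : ∀ x ∈ S, a ≤ x) : a ≤ mnn S := by
  rw [mnn, dif_pos h]; exact Finset.le_min' _ _ _ ha

lemma le_mxx {S : Finset ℕ} {x : ℕ} (hx : x ∈ S) : x ≤ mxx S := Finset.le_sup (f := id) hx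

lemma mxx_le {S : Finset ℕ} {a : ℕ} (ha : ∀ x ∈ S, x ≤ a) : mxx S ≤ a := Finset.sup_le ha

lemma mxx_mem {S : Finset ℕ} (h : S.Nonempty) : mxx S ∈ S := by
  obtain ⟨b, hb, he⟩ := Finset.exists_mem_eq_sup S h id
  rw [mxx, he]; exact hb

lemma one_le_mnn {S : Finset ℕ} (h : S.Nonempty) (h0 : 0 ∉ S) : 1 ≤ mnn S := by
  rcases Nat.eq_zero_or_pos (mnn S) with h1 | h1
  · exact absurd (h1 ▸ mnn_mem h) h0
  · exact h1

def sl (S : Finset ℕ) : ℕ :=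
  Nat.findGreatest (fun t => Finset.Icc (mxx S + 1 - t) (mxx S) ⊆ S) S.card

lemma sl_le_card (S : Finset ℕ) : sl S ≤ S.card := Nat.findGreatest_le _

lemma le_sl {S : Finset ℕ} {t : ℕ} (h1 : t ≤ S.card)
    (h2 : Finset.Icc (mxx S + 1 - t) (mxx S) ⊆ S) : t ≤ sl S :=
  Nat.le_findGreatest h1 h2

lemma one_le_sl {S : Finset ℕ} (h : S.Nonempty) : 1 ≤ sl S := by
  apply le_sl h.card_pos
  intro x hx
  simp only [Finset.mem_Icc] at hx
  have : x = mxx S := by omega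
  exact this ▸ mxx_mem h

lemma sl_subset {S : Finset ℕ} (h : S.Nonempty) :
    Finset.Icc (mxx S + 1 - sl S) (mxx S) ⊆ S := by
  have h1 : Finset.Icc (mxx S + 1 - 1) (mxx S) ⊆ S := by
    intro x hx
    simp only [Finset.mem_Icc] at hx
    have : x = mxx S := by omega
    exact this ▸ mxx_mem h
  exact Nat.findGreatest_spec
    (P := fun t => Finset.Icc (mxx S + 1 - t) (mxx S) ⊆ S) h.card_pos h1

lemma sl_le_mxx {S : Finset ℕ} (h : S.Nonempty) (h0 : 0 ∉ S) : sl S ≤ mxx S := by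
  by_contra hc
  have : (0 : ℕ) ∈ Finset.Icc (mxx S + 1 - sl S) (mxx S) := by
    simp only [Finset.mem_Icc]; omega
  exact h0 (sl_subset h this)

lemma sl_eq_card_eq {S : Finset ℕ} (h : S.Nonempty) (h0 : 0 ∉ S) (hc : sl S = S.card) :
    S = Finset.Icc (mxx S + 1 - sl S) (mxx S) := by
  have h1 := sl_subset h
  have h2 : (Finset.Icc (mxx S + 1 - sl S) (mxx S)).card = S.card := by
    rw [Nat.card_Icc]
    have := sl_le_mxx h h0
    omega
  exact (Finset.eq_of_subset_of_card_le h1 (le_of_eq h2.symm)).symm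

lemma not_mem_sl {S : Finset ℕ} (h : S.Nonempty) (h0 : 0 ∉ S) : mxx S - sl S ∉ S := by
  have hkM := sl_le_mxx h h0
  have hk1 := one_le_sl h
  rcases eq_or_lt_of_le (sl_le_card S) with hc | hc
  · intro hmem
    have h2 : mxx S - sl S ∈ Finset.Icc (mxx S + 1 - sl S) (mxx S) := by
      rw [← sl_eq_card_eq h h0 hc]; exact hmem
    simp only [Finset.mem_Icc] at h2; omega
  · intro hmem
    have hrfl : Nat.findGreatest (fun t => Finset.Icc (mxx S + 1 - t) (mxx S) ⊆ S) S.card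
        = sl S := rfl
    have hng := (Nat.findGreatest_eq_iff.mp hrfl).2.2
      (n := sl S + 1) (by omega) hc
    apply hng
    intro x hx
    simp only [Finset.mem_Icc] at hx
    by_cases hxe : x = mxx S - sl S
    · exact hxe ▸ hmem
    · exact sl_subset h (by simp only [Finset.mem_Icc]; omega)

def franklin (S : Finset ℕ) : Finset ℕ :=
  if mnn S ≤ sl S then
    ((S \ Finset.Icc (mxx S + 1 - mnn S) (mxx S)).erase (mnn S)) ∪
      Finset.Icc (mxx S + 2 - mnn S) (mxx S + 1)
  else
    (S \ Finset.Icc (mxx S + 1 - sl S) (mxx S)) ∪ Finset.Icc (mxx S - sl S) (mxx S - 1)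
      ∪ {sl S}


lemma caseA {S : Finset ℕ} (h : S.Nonempty) (h0 : 0 ∉ S)
    (hA : mnn S ≤ sl S) (hmr : mnn S < S.card) :
    franklin (franklin S) = S ∧ (franklin S).card + 1 = S.card ∧
      (∑ x ∈ franklin S, x) = ∑ x ∈ S, x ∧ 0 ∉ franklin S := by
  set m := mnn S with hmdef
  set M := mxx S with hMdef
  set k := sl S with hkdef
  have hm1 : 1 ≤ m := one_le_mnn h h0
  have hkM : k ≤ M := sl_le_mxx h h0
  have hrM : S.card ≤ M + 1 - m := by
    have hsub : S ⊆ Finset.Icc m M := fun x hx => by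
      simp only [Finset.mem_Icc]; exact ⟨mnn_le hx, le_mxx hx⟩
    have := Finset.card_le_card hsub
    rwa [Nat.card_Icc] at this
  have h2m : 2 * m ≤ M := by omega
  have hIccS : Finset.Icc (M + 1 - m) M ⊆ S := fun x hx =>
    sl_subset h (by simp only [Finset.mem_Icc] at hx ⊢; omega)
  have hfr : franklin S = ((S \ Finset.Icc (M + 1 - m) M).erase m) ∪
      Finset.Icc (M + 2 - m) (M + 1) := by
    rw [franklin, if_pos hA]
  have hmemS' : ∀ x, x ∈ franklin S ↔ (x ∈ S ∧ x ≠ m ∧ x + m ≤ M) ∨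
      (M + 2 - m ≤ x ∧ x ≤ M + 1) := by
    intro x
    rw [hfr]
    simp only [Finset.mem_union, Finset.mem_erase, Finset.mem_sdiff, Finset.mem_Icc]
    constructor
    · rintro (⟨hne, hxS, hxI⟩ | hxI)
      · have := le_mxx hxS
        exact Or.inl ⟨hxS, hne, by omega⟩
      · exact Or.inr hxI
    · rintro (⟨hxS, hne, hle⟩ | hxI)
      · exact Or.inl ⟨hne, hxS, by omega⟩
      · exact Or.inr hxI
  have hmL : m ∉ Finset.Icc (M + 1 - m) M := by simp only [Finset.mem_Icc]; omega
  have hmSd : m ∈ S \ Finset.Icc (M + 1 - m) M :=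
    Finset.mem_sdiff.mpr ⟨mnn_mem h, hmL⟩
  have hcardL : ((S \ Finset.Icc (M + 1 - m) M).erase m).card + 1 + m = S.card := by
    have h1 : (S \ Finset.Icc (M + 1 - m) M).card = S.card - m := by
      rw [Finset.card_sdiff_of_subset hIccS, Nat.card_Icc]
      have : M + 1 - (M + 1 - m) = m := by omega
      rw [this]
    have h2 := Finset.card_erase_of_mem hmSd
    have h4 : 1 ≤ (S \ Finset.Icc (M + 1 - m) M).card := Finset.card_pos.mpr ⟨m, hmSd⟩
    omega
  have hdisj : Disjoint ((S \ Finset.Icc (M + 1 - m) M).erase m)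
      (Finset.Icc (M + 2 - m) (M + 1)) := by
    rw [Finset.disjoint_left]
    intro x hxL hxR
    simp only [Finset.mem_erase, Finset.mem_sdiff, Finset.mem_Icc] at hxL hxR
    have := le_mxx hxL.2.1
    omega
  have hcard' : (franklin S).card + 1 = S.card := by
    rw [hfr, Finset.card_union_of_disjoint hdisj, Nat.card_Icc]
    omega
  have hsumIcc : ∑ x ∈ Finset.Icc (M + 2 - m) (M + 1), x
      = (∑ x ∈ Finset.Icc (M + 1 - m) M, x) + m := by
    have himg : Finset.Icc (M + 2 - m) (M + 1)
        = (Finset.Icc (M + 1 - m) M).image (· + 1) := by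
      rw [Finset.image_add_right_Icc]
      congr 1
      omega
    rw [himg, Finset.sum_image (by intro a _ b _ hab; beta_reduce at hab; omega), Finset.sum_add_distrib,
      Finset.sum_const, smul_eq_mul, mul_one, Nat.card_Icc]
    congr 1
    omega
  have hsumS : ∑ x ∈ S, x = (∑ x ∈ (S \ Finset.Icc (M + 1 - m) M).erase m, x) + m
      + ∑ x ∈ Finset.Icc (M + 1 - m) M, x := by
    have h1 : (∑ x ∈ S \ Finset.Icc (M + 1 - m) M, x) + ∑ x ∈ Finset.Icc (M + 1 - m) M, x
        = ∑ x ∈ S, x := Finset.sum_sdiff hIccS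
    have h2 : (∑ x ∈ (S \ Finset.Icc (M + 1 - m) M).erase m, x) + m
        = ∑ x ∈ S \ Finset.Icc (M + 1 - m) M, x :=
      Finset.sum_erase_add _ _ hmSd
    omega
  have hsum' : (∑ x ∈ franklin S, x) = ∑ x ∈ S, x := by
    rw [hfr, Finset.sum_union hdisj]
    omega
  have h0' : 0 ∉ franklin S := by
    intro hx
    rcases (hmemS' 0).1 hx with ⟨hs, _⟩ | ⟨hI, _⟩
    · exact h0 hs
    · omega
  have hne' : (franklin S).Nonempty := ⟨M + 1, (hmemS' _).2 (Or.inr ⟨by omega, le_refl _⟩)⟩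
  have hmx' : mxx (franklin S) = M + 1 := by
    apply le_antisymm
    · apply mxx_le
      intro x hx
      rcases (hmemS' x).1 hx with ⟨hxS, _, _⟩ | ⟨_, h2⟩
      · have := le_mxx hxS; omega
      · exact h2
    · exact le_mxx ((hmemS' _).2 (Or.inr ⟨by omega, le_refl _⟩))
  have hmn' : m + 1 ≤ mnn (franklin S) := by
    apply le_mnn hne'
    intro x hx
    rcases (hmemS' x).1 hx with ⟨hxS, hne2, _⟩ | ⟨h2, _⟩
    · have := mnn_le hxS
      rcases eq_or_lt_of_le this with he | hl
      · exact absurd he.symm hne2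
      · omega
    · omega
  have hsl' : sl (franklin S) = m := by
    apply le_antisymm
    · by_contra hc
      push_neg at hc
      have hspec := sl_subset hne'
      rw [hmx'] at hspec
      have hslM := sl_le_mxx hne' h0'
      rw [hmx'] at hslM
      have hmem2 : M + 1 - m ∈ Finset.Icc (M + 1 + 1 - sl (franklin S)) (M + 1) := by
        simp only [Finset.mem_Icc]; omega
      have := hspec hmem2
      rcases (hmemS' _).1 this with ⟨_, _, hh⟩ | ⟨hh, _⟩ <;> omega
    · apply le_sl
      · omega
      · rw [hmx']
        intro x hx
        simp only [Finset.mem_Icc] at hx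
        exact (hmemS' x).2 (Or.inr ⟨by omega, by omega⟩)
  have hcond' : ¬ (mnn (franklin S) ≤ sl (franklin S)) := by rw [hsl']; omega
  have e1 : M + 1 + 1 - m = M + 2 - m := by omega
  have e2 : M + 1 - 1 = M := by omega
  have e3 : M + 1 - m + 1 + m = M + 1 + 1 := by omega
  have hfr2 : franklin (franklin S) =
      (franklin S \ Finset.Icc (M + 2 - m) (M + 1)) ∪ Finset.Icc (M + 1 - m) M ∪ {m} := by
    rw [franklin, if_neg hcond', hmx', hsl', e1, e2]
  have hfinal : franklin (franklin S) = S := by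
    rw [hfr2]
    ext x
    simp only [Finset.mem_union, Finset.mem_sdiff, Finset.mem_Icc, Finset.mem_singleton,
      hmemS' x]
    constructor
    · rintro ((⟨hx1 | hx2, hnot⟩ | hx3) | hx4)
      · exact hx1.1
      · exact absurd hx2 hnot
      · exact hIccS (Finset.mem_Icc.mpr hx3)
      · exact hx4 ▸ mnn_mem h
    · intro hxS
      by_cases hxm : x = m
      · exact Or.inr hxm
      · by_cases hxle : x + m ≤ M
        · exact Or.inl (Or.inl ⟨Or.inl ⟨hxS, hxm, hxle⟩, by omega⟩)
        · have h1 := le_mxx hxS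
          have h2 := mnn_le hxS
          exact Or.inl (Or.inr ⟨by omega, h1⟩)
  exact ⟨hfinal, hcard', hsum', h0'⟩


lemma caseB {S : Finset ℕ} (h : S.Nonempty) (h0 : 0 ∉ S)
    (hB : sl S < mnn S) (hexc : ¬(S.card = sl S ∧ mnn S = sl S + 1)) :
    franklin (franklin S) = S ∧ (franklin S).card = S.card + 1 ∧
      (∑ x ∈ franklin S, x) = ∑ x ∈ S, x ∧ 0 ∉ franklin S := by
  set m := mnn S with hmdef
  set M := mxx S with hMdef
  set k := sl S with hkdef
  have hm1 : 1 ≤ m := one_le_mnn h h0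
  have hk1 : 1 ≤ k := one_le_sl h
  have hkM : k ≤ M := sl_le_mxx h h0
  have hks : Finset.Icc (M + 1 - k) M ⊆ S := sl_subset h
  have hkr : k ≤ S.card := sl_le_card S
  have hMk : M - k ∉ S := not_mem_sl h h0
  have hcardIcc : (Finset.Icc (M + 1 - k) M).card = k := by
    rw [Nat.card_Icc]; omega
  have hmM1k : m ≤ M + 1 - k :=
    mnn_le (hks (Finset.mem_Icc.mpr ⟨le_refl _, by omega⟩))
  have hM2k : 2 * k + 1 ≤ M := by
    rcases eq_or_lt_of_le hkr with hc | hc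
    · have hS := sl_eq_card_eq h h0 hc
      have hmm : M + 1 - k ≤ m := by
        have hm2 := mnn_mem h
        have : m ∈ Finset.Icc (M + 1 - k) M := by rw [← hS]; exact hm2
        simp only [Finset.mem_Icc] at this
        exact this.1
      have hMne : M ≠ 2 * k := by
        intro hMe
        exact hexc ⟨hc.symm, by omega⟩
      omega
    · have hex : ∃ x ∈ S, x ∉ Finset.Icc (M + 1 - k) M := by
        by_contra hno
        push_neg at hno
        have := Finset.card_le_card (fun x hx => hno x hx)
        omega
      obtain ⟨x, hxS, hxI⟩ := hex
      simp only [Finset.mem_Icc] at hxI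
      have hx1 : x ≤ M := le_mxx hxS
      have hx2 : m ≤ x := mnn_le hxS
      have hx3 : x ≠ M - k := fun hh => hMk (hh ▸ hxS)
      omega
  have hfr : franklin S = (S \ Finset.Icc (M + 1 - k) M) ∪ Finset.Icc (M - k) (M - 1)
      ∪ {k} := by
    rw [franklin, if_neg (by omega)]
  have hmemS' : ∀ x, x ∈ franklin S ↔ (x ∈ S ∧ x + k < M) ∨ (M - k ≤ x ∧ x ≤ M - 1)
      ∨ x = k := by
    intro x
    rw [hfr]
    simp only [Finset.mem_union, Finset.mem_sdiff, Finset.mem_Icc, Finset.mem_singleton]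
    constructor
    · rintro ((⟨hxS, hxI⟩ | hxI) | hxk)
      · have h1 := le_mxx hxS
        have h2 : x ≠ M - k := fun hh => hMk (hh ▸ hxS)
        exact Or.inl ⟨hxS, by omega⟩
      · exact Or.inr (Or.inl hxI)
      · exact Or.inr (Or.inr hxk)
    · rintro (⟨hxS, hlt⟩ | hxI | hxk)
      · exact Or.inl (Or.inl ⟨hxS, by omega⟩)
      · exact Or.inl (Or.inr hxI)
      · exact Or.inr hxk
  have hdisj1 : Disjoint (S \ Finset.Icc (M + 1 - k) M) (Finset.Icc (M - k) (M - 1)) := by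
    rw [Finset.disjoint_left]
    intro x hx hx2
    simp only [Finset.mem_sdiff, Finset.mem_Icc] at hx hx2
    have h1 := le_mxx hx.1
    have h2 : x ≠ M - k := fun hh => hMk (hh ▸ hx.1)
    omega
  have hdisj2 : Disjoint ((S \ Finset.Icc (M + 1 - k) M) ∪ Finset.Icc (M - k) (M - 1))
      ({k} : Finset ℕ) := by
    rw [Finset.disjoint_right]
    intro x hx
    simp only [Finset.mem_singleton] at hx
    subst hx
    simp only [Finset.mem_union, Finset.mem_sdiff, Finset.mem_Icc]
    push_neg
    constructor
    · intro hkS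
      exact absurd (mnn_le hkS) (by omega)
    · intro hge
      omega
  have hcardL : (S \ Finset.Icc (M + 1 - k) M).card + k = S.card := by
    rw [Finset.card_sdiff_of_subset hks, hcardIcc]
    omega
  have hcard' : (franklin S).card = S.card + 1 := by
    rw [hfr, Finset.card_union_of_disjoint hdisj2, Finset.card_union_of_disjoint hdisj1,
      Nat.card_Icc, Finset.card_singleton]
    have : M - 1 + 1 - (M - k) = k := by omega
    omega
  have hsum2 : ∑ x ∈ Finset.Icc (M + 1 - k) M, x
      = (∑ x ∈ Finset.Icc (M - k) (M - 1), x) + k := by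
    have himg : Finset.Icc (M + 1 - k) M = (Finset.Icc (M - k) (M - 1)).image (· + 1) := by
      rw [Finset.image_add_right_Icc]
      congr 1 <;> omega
    rw [himg, Finset.sum_image (by intro a _ b _ hab; beta_reduce at hab; omega), Finset.sum_add_distrib,
      Finset.sum_const, smul_eq_mul, mul_one, Nat.card_Icc]
    congr 1
    omega
  have hsum' : (∑ x ∈ franklin S, x) = ∑ x ∈ S, x := by
    rw [hfr, Finset.sum_union hdisj2, Finset.sum_union hdisj1, Finset.sum_singleton]
    have h1 : (∑ x ∈ S \ Finset.Icc (M + 1 - k) M, x) + ∑ x ∈ Finset.Icc (M + 1 - k) M, x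
        = ∑ x ∈ S, x := Finset.sum_sdiff hks
    omega
  have h0' : 0 ∉ franklin S := by
    intro hx
    rcases (hmemS' 0).1 hx with ⟨hs, _⟩ | ⟨hI, _⟩ | hk0
    · exact h0 hs
    · omega
    · omega
  have hne' : (franklin S).Nonempty := ⟨k, (hmemS' k).2 (Or.inr (Or.inr rfl))⟩
  have hmx' : mxx (franklin S) = M - 1 := by
    apply le_antisymm
    · apply mxx_le
      intro x hx
      rcases (hmemS' x).1 hx with ⟨_, h2⟩ | ⟨_, h2⟩ | h2 <;> omega
    · exact le_mxx ((hmemS' _).2 (Or.inr (Or.inl ⟨by omega, le_refl _⟩)))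
  have hmn'_ge : ∀ x ∈ franklin S, k ≤ x := by
    intro x hx
    rcases (hmemS' x).1 hx with ⟨hs, _⟩ | ⟨h2, _⟩ | h2
    · have := mnn_le hs; omega
    · omega
    · omega
  have hmn' : mnn (franklin S) = k :=
    le_antisymm (mnn_le ((hmemS' k).2 (Or.inr (Or.inr rfl)))) (le_mnn hne' hmn'_ge)
  have hsl'_ge : k ≤ sl (franklin S) := by
    apply le_sl
    · omega
    · rw [hmx']
      intro x hx
      simp only [Finset.mem_Icc] at hx
      exact (hmemS' x).2 (Or.inr (Or.inl ⟨by omega, by omega⟩))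
  have hcond' : mnn (franklin S) ≤ sl (franklin S) := by rw [hmn']; exact hsl'_ge
  have e1 : M - 1 + 1 - k = M - k := by omega
  have e2 : M - 1 + 2 - k = M + 1 - k := by omega
  have e3 : M - 1 + 1 = M := by omega
  have hfr2 : franklin (franklin S) =
      ((franklin S \ Finset.Icc (M - k) (M - 1)).erase k) ∪ Finset.Icc (M + 1 - k) M := by
    rw [franklin, if_pos hcond', hmx', hmn', e1, e2, e3]
  have hfinal : franklin (franklin S) = S := by
    rw [hfr2]
    ext x
    simp only [Finset.mem_union, Finset.mem_erase, Finset.mem_sdiff, Finset.mem_Icc,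
      hmemS' x]
    constructor
    · rintro (⟨hxk, (⟨hxS, hlt⟩ | hxI | hxk2), hnot⟩ | hxI)
      · exact hxS
      · exact absurd hxI hnot
      · exact absurd hxk2 hxk
      · exact hks (Finset.mem_Icc.mpr hxI)
    · intro hxS
      have h1 := le_mxx hxS
      have h2 := mnn_le hxS
      have h3 : x ≠ M - k := fun hh => hMk (hh ▸ hxS)
      by_cases hge : M + 1 - k ≤ x
      · exact Or.inr ⟨hge, h1⟩
      · exact Or.inl ⟨by omega, Or.inl ⟨hxS, by omega⟩, by omega⟩
  exact ⟨hfinal, hcard', hsum', h0'⟩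

lemma gauss (a b : ℕ) (hab : a ≤ b + 1) :
    a * (a - 1) + 2 * ∑ x ∈ Finset.Icc a b, x = (b + 1) * b := by
  have h4 : Finset.Icc a b = Finset.Ico a (b + 1) := by rw [Finset.Ico_add_one_right_eq_Icc]
  have h1 : (∑ i ∈ Finset.Ico 0 a, i) + ∑ i ∈ Finset.Ico a (b + 1), i
      = ∑ i ∈ Finset.Ico 0 (b + 1), i :=
    Finset.sum_Ico_consecutive _ (Nat.zero_le a) hab
  have g1 := Finset.sum_range_id_mul_two a
  have g2 := Finset.sum_range_id_mul_two (b + 1)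
  rw [Finset.range_eq_Ico] at g1 g2
  simp only [Nat.add_sub_cancel] at g2
  rw [h4]
  omega

lemma not_pent1 {n r' : ℕ}
    (heq : (r' + 1) * r' + 2 * n = (2 * r' + 2) * (2 * r' + 1))
    (h7 : n % 7 = 3 ∨ n % 7 = 4 ∨ n % 7 = 6) : False := by
  have hz := congrArg (Nat.cast : ℕ → ZMod 7) heq
  push_cast at hz
  have hn : ((n : ℕ) : ZMod 7) = ((n % 7 : ℕ) : ZMod 7) := (ZMod.natCast_mod n 7).symm
  have key : ∀ c : ZMod 7, (c = 3 ∨ c = 4 ∨ c = 6) →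
      ∀ x : ZMod 7, (x + 1) * x + 2 * c ≠ (2 * x + 2) * (2 * x + 1) := by decide
  rcases h7 with h | h | h <;> rw [h] at hn <;> rw [hn] at hz <;>
    [exact key _ (Or.inl (by norm_num)) _ hz;
     exact key _ (Or.inr (Or.inl (by norm_num))) _ hz;
     exact key _ (Or.inr (Or.inr (by norm_num))) _ hz]

lemma not_pent2 {n k : ℕ}
    (heq : (k + 1) * k + 2 * n = (2 * k + 1) * (2 * k))
    (h7 : n % 7 = 3 ∨ n % 7 = 4 ∨ n % 7 = 6) : False := by
  have hz := congrArg (Nat.cast : ℕ → ZMod 7) heq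
  push_cast at hz
  have hn : ((n : ℕ) : ZMod 7) = ((n % 7 : ℕ) : ZMod 7) := (ZMod.natCast_mod n 7).symm
  have key : ∀ c : ZMod 7, (c = 3 ∨ c = 4 ∨ c = 6) →
      ∀ x : ZMod 7, (x + 1) * x + 2 * c ≠ (2 * x + 1) * (2 * x) := by decide
  rcases h7 with h | h | h <;> rw [h] at hn <;> rw [hn] at hz <;>
    [exact key _ (Or.inl (by norm_num)) _ hz;
     exact key _ (Or.inr (Or.inl (by norm_num))) _ hz;
     exact key _ (Or.inr (Or.inr (by norm_num))) _ hz]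

lemma franklin_spec {S : Finset ℕ} (h : S.Nonempty) (h0 : 0 ∉ S)
    (h7 : (∑ x ∈ S, x) % 7 = 3 ∨ (∑ x ∈ S, x) % 7 = 4 ∨ (∑ x ∈ S, x) % 7 = 6) :
    franklin (franklin S) = S ∧
      ((franklin S).card + 1 = S.card ∨ (franklin S).card = S.card + 1) ∧
      (∑ x ∈ franklin S, x) = ∑ x ∈ S, x ∧ 0 ∉ franklin S := by
  have hm1 : 1 ≤ mnn S := one_le_mnn h h0
  have hk1 : 1 ≤ sl S := one_le_sl h
  have hkM : sl S ≤ mxx S := sl_le_mxx h h0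
  have hkr : sl S ≤ S.card := sl_le_card S
  by_cases hc : mnn S ≤ sl S
  · have hmr : mnn S < S.card := by
      by_contra hge
      push_neg at hge
      have hkc : sl S = S.card := by omega
      have hS := sl_eq_card_eq h h0 hkc
      have hmm : mxx S + 1 - sl S ≤ mnn S := by
        have hm2 := mnn_mem h
        have : mnn S ∈ Finset.Icc (mxx S + 1 - sl S) (mxx S) := by rw [← hS]; exact hm2
        simp only [Finset.mem_Icc] at this
        exact this.1
      have hmm2 : mnn S ≤ mxx S + 1 - sl S :=
        mnn_le (sl_subset h (Finset.mem_Icc.mpr ⟨le_refl _, by omega⟩))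
      have hmk : mnn S = sl S := by omega
      obtain ⟨r', hr'⟩ : ∃ r', sl S = r' + 1 := ⟨sl S - 1, by omega⟩
      have hIcc : Finset.Icc (mxx S + 1 - sl S) (mxx S)
          = Finset.Icc (r' + 1) (2 * r' + 1) := by
        congr 1 <;> omega
      have hsum : ∑ x ∈ S, x = ∑ x ∈ Finset.Icc (r' + 1) (2 * r' + 1), x := by
        conv_lhs => rw [hS]
        rw [hIcc]
      have hg := gauss (r' + 1) (2 * r' + 1) (by omega)
      simp only [Nat.add_sub_cancel] at hg
      rw [← hsum] at hg
      have e : 2 * r' + 1 + 1 = 2 * r' + 2 := by omega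
      rw [e] at hg
      exact not_pent1 hg h7
    obtain ⟨a, b, c, d⟩ := caseA h h0 hc hmr
    exact ⟨a, Or.inl b, c, d⟩
  · push_neg at hc
    have hexc : ¬(S.card = sl S ∧ mnn S = sl S + 1) := by
      rintro ⟨h1, h2⟩
      have hS := sl_eq_card_eq h h0 h1.symm
      have hmm : mxx S + 1 - sl S ≤ mnn S := by
        have hm2 := mnn_mem h
        have : mnn S ∈ Finset.Icc (mxx S + 1 - sl S) (mxx S) := by rw [← hS]; exact hm2
        simp only [Finset.mem_Icc] at this
        exact this.1
      have hmm2 : mnn S ≤ mxx S + 1 - sl S :=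
        mnn_le (sl_subset h (Finset.mem_Icc.mpr ⟨le_refl _, by omega⟩))
      -- mnn S = sl S + 1 = mxx S + 1 - sl S, so mxx S = 2 * sl S
      have hM : mxx S = 2 * sl S := by omega
      have hIcc : Finset.Icc (mxx S + 1 - sl S) (mxx S)
          = Finset.Icc (sl S + 1) (2 * sl S) := by
        congr 1
        omega
      have hsum : ∑ x ∈ S, x = ∑ x ∈ Finset.Icc (sl S + 1) (2 * sl S), x := by
        conv_lhs => rw [hS]
        rw [hIcc]
      have hg := gauss (sl S + 1) (2 * sl S) (by omega)
      simp only [Nat.add_sub_cancel] at hg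
      rw [← hsum] at hg
      exact not_pent2 hg h7
    obtain ⟨a, b, c, d⟩ := caseB h h0 hc hexc
    exact ⟨a, Or.inr b, c, d⟩

lemma coeff_fps_one (n : ℕ) :
    PowerSeries.coeff n (fps 1) =
      ∑ S ∈ (Finset.Icc 1 n).powerset.filter (fun S => ∑ x ∈ S, x = n),
        (-1 : ℤ) ^ S.card := by
  rw [fps, PowerSeries.coeff_mk]
  have hfac : ∀ m ∈ Finset.Icc 1 n,
      (1 : PowerSeries ℤ) - PowerSeries.X ^ (1 * m) = -(PowerSeries.X ^ m) + 1 := by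
    intro m _
    rw [one_mul]
    ring
  rw [Finset.prod_congr rfl hfac, Finset.prod_add]
  have hterm : ∀ t ∈ (Finset.Icc 1 n).powerset,
      (∏ i ∈ t, -(PowerSeries.X : PowerSeries ℤ) ^ i) * ∏ _i ∈ Finset.Icc 1 n \ t, 1
        = PowerSeries.C ((-1) ^ t.card) * PowerSeries.X ^ (∑ x ∈ t, x) := by
    intro t _
    rw [Finset.prod_const_one, mul_one]
    calc ∏ i ∈ t, -(PowerSeries.X : PowerSeries ℤ) ^ i
        = ∏ i ∈ t, ((-1) * (PowerSeries.X : PowerSeries ℤ) ^ i) := by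
          apply Finset.prod_congr rfl; intro i _; ring
      _ = (∏ _i ∈ t, (-1 : PowerSeries ℤ)) * ∏ i ∈ t, (PowerSeries.X : PowerSeries ℤ) ^ i :=
          Finset.prod_mul_distrib
      _ = (-1) ^ t.card * PowerSeries.X ^ (∑ x ∈ t, x) := by
          rw [Finset.prod_const, Finset.prod_pow_eq_pow_sum]
      _ = PowerSeries.C ((-1) ^ t.card) * PowerSeries.X ^ (∑ x ∈ t, x) := by
          rw [map_pow, map_neg, map_one]
  rw [Finset.sum_congr rfl hterm, map_sum, Finset.sum_filter]
  apply Finset.sum_congr rfl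
  intro t _
  rw [PowerSeries.coeff_C_mul, PowerSeries.coeff_X_pow]
  by_cases hh : ∑ x ∈ t, x = n
  · simp [hh]
  · simp only [hh, if_false, mul_zero]
    rw [if_neg (fun hnn => hh hnn.symm), mul_zero]

lemma coeff_fps_one_vanish {n : ℕ} (h7 : n % 7 = 3 ∨ n % 7 = 4 ∨ n % 7 = 6) :
    PowerSeries.coeff n (fps 1) = 0 := by
  rw [coeff_fps_one]
  have hn1 : 1 ≤ n := by omega
  have hmem : ∀ S ∈ (Finset.Icc 1 n).powerset.filter (fun S => ∑ x ∈ S, x = n),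
      S.Nonempty ∧ 0 ∉ S ∧ (∑ x ∈ S, x) = n := by
    intro S hS
    rw [Finset.mem_filter, Finset.mem_powerset] at hS
    refine ⟨?_, ?_, hS.2⟩
    · rcases Finset.eq_empty_or_nonempty S with rfl | hne
      · simp at hS; omega
      · exact hne
    · intro h0
      have := hS.1 h0
      simp at this
  apply Finset.sum_involution (g := fun S _ => FranklinAux.franklin S)
  · intro S hS
    obtain ⟨hne, h0, hsum⟩ := hmem S hS
    obtain ⟨_, hcard, _, _⟩ := FranklinAux.franklin_spec hne h0 (by rw [hsum]; exact h7)
    rcases hcard with hcd | hcd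
    · rw [← hcd, pow_succ]
      ring
    · rw [hcd, pow_succ]
      ring
  · intro S hS _
    obtain ⟨hne, h0, hsum⟩ := hmem S hS
    obtain ⟨_, hcard, _, _⟩ := FranklinAux.franklin_spec hne h0 (by rw [hsum]; exact h7)
    intro heq
    rw [heq] at hcard
    omega
  · intro S hS
    obtain ⟨hne, h0, hsum⟩ := hmem S hS
    obtain ⟨_, _, hsum', h0'⟩ := FranklinAux.franklin_spec hne h0 (by rw [hsum]; exact h7)
    rw [Finset.mem_filter, Finset.mem_powerset]
    constructor
    · intro x hx
      rw [Finset.mem_Icc]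
      constructor
      · rcases Nat.eq_zero_or_pos x with rfl | hp
        · exact absurd hx h0'
        · exact hp
      · calc x ≤ ∑ y ∈ FranklinAux.franklin S, y :=
              Finset.single_le_sum (f := fun i => i) (fun i _ => Nat.zero_le i) hx
          _ = n := by rw [hsum', hsum]
    · rw [hsum', hsum]
  · intro S hS
    obtain ⟨hne, h0, hsum⟩ := hmem S hS
    obtain ⟨hinv, _, _, _⟩ := FranklinAux.franklin_spec hne h0 (by rw [hsum]; exact h7)
    exact hinv

def Mul7 (F : PowerSeries ℤ) : Prop :=
  ∀ j : ℕ, ¬ (7 ∣ j) → PowerSeries.coeff j F = 0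

lemma Mul7.mul {F G : PowerSeries ℤ} (hF : Mul7 F) (hG : Mul7 G) : Mul7 (F * G) := by
  intro j hj
  rw [PowerSeries.coeff_mul]
  apply Finset.sum_eq_zero
  intro p hp
  rw [Finset.HasAntidiagonal.mem_antidiagonal] at hp
  by_cases h1 : 7 ∣ p.1
  · have h2 : ¬ 7 ∣ p.2 := fun hd => hj (hp ▸ Nat.dvd_add h1 hd)
    rw [hG _ h2, mul_zero]
  · rw [hF _ h1, zero_mul]

lemma mul7_one : Mul7 1 := by
  intro j hj
  have : j ≠ 0 := by rintro rfl; exact hj ⟨0, rfl⟩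
  simp [PowerSeries.coeff_one, this]

lemma mul7_factor (m : ℕ) : Mul7 (1 - (PowerSeries.X : PowerSeries ℤ) ^ (7 * m)) := by
  intro j hj
  rw [map_sub, PowerSeries.coeff_one, PowerSeries.coeff_X_pow]
  have h1 : j ≠ 0 := by rintro rfl; exact hj ⟨0, rfl⟩
  have h2 : j ≠ 7 * m := by rintro rfl; exact hj ⟨m, rfl⟩
  simp [h1, h2]

lemma mul7_fps7 : Mul7 (fps 7) := by
  intro j hj
  rw [fps, PowerSeries.coeff_mk]
  have hprod : Mul7 (∏ m ∈ Finset.Icc 1 j, (1 - (PowerSeries.X : PowerSeries ℤ) ^ (7 * m))) := by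
    apply Finset.prod_induction _ Mul7 (fun a b ha hb => ha.mul hb) mul7_one
    intro m _
    exact mul7_factor m
  exact hprod j hj

lemma mul7_fps7_cubed : Mul7 (fps 7 ^ 3) := by
  have h := mul7_fps7
  have h3 : fps 7 ^ 3 = fps 7 * fps 7 * fps 7 := by ring
  rw [h3]
  exact (h.mul h).mul h

end FranklinAux



/-- If `m ≡ 3, 4` or `6 (mod 7)`, the coefficient of `q^m` in `f_1 f_7^3` vanishes. -/
theorem coeff_f1_mul_f7_cubed_eq_zero (m : ℕ)
    (hm : m % 7 = 3 ∨ m % 7 = 4 ∨ m % 7 = 6) :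
    PowerSeries.coeff m (fps 1 * fps 7 ^ 3) = 0 := by
  rw [PowerSeries.coeff_mul]
  apply Finset.sum_eq_zero
  intro p hp
  rw [Finset.HasAntidiagonal.mem_antidiagonal] at hp
  by_cases h7 : 7 ∣ p.2
  · have hp1 : p.1 % 7 = 3 ∨ p.1 % 7 = 4 ∨ p.1 % 7 = 6 := by
      obtain ⟨c, hc⟩ := h7
      omega
    rw [FranklinAux.coeff_fps_one_vanish hp1, zero_mul]
  · rw [FranklinAux.mul7_fps7_cubed _ h7, mul_zero]
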